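/- arXiv:math/0112291 — 7 statements merged into one kernel-verified Lean document; each statement's English description precedes it below -/
import Mathlib

section
/- Let n ≥ 1, s ≥ 0, and let f_{kl} (1 ≤ k,l ≤ n) be a family of polynomials in n variables over ℝ, each homogeneous of degree s, satisfying the compatibility conditions f_{ij} = f_{ji} for all i,j and ∂f_{ij}/∂x^k = ∂f_{kj}/∂x^i for all i,j,k. Then there exists a unique polynomial u in n variables, homogeneous of degree s+2, such that ∂²u/∂x^k∂x^l = f_{kl} for all k,l. -/
open MvPolynomial

/-! By Euler's identity, a homogeneous polynomial of degree `m + 1` is `(m + 1)⁻¹ ∑ xⁱ ∂ᵢφ`, so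
it is determined by its gradient; conversely a closed family `gᵢ` of degree `m` is the gradient
of `(m + 1)⁻¹ ∑ xⁱ gᵢ`. Applying this first to the rows `f · l`, giving potentials `v l`, and then
to the family `v`, which is closed because `f` is symmetric, yields `u`. -/

namespace MvPolynomial

variable {σ : Type*} [Fintype σ]

theorem pderiv_sum_X_mul {R : Type*} [CommSemiring R] {g : σ → MvPolynomial σ R}
    (hclosed : ∀ i k, pderiv k (g i) = pderiv i (g k)) (k : σ) :
    pderiv k (∑ i, X i * g i) = g k + ∑ i, X i * pderiv i (g k) := by
  classical
  simp [pderiv_X, Finset.sum_add_distrib, hclosed _ k, Pi.single_apply, add_comm]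

variable {K : Type*} [Field K] [CharZero K]

theorem IsHomogeneous.eq_of_pderiv_eq {m : ℕ} {φ ψ : MvPolynomial σ K}
    (hφ : φ.IsHomogeneous (m + 1)) (hψ : ψ.IsHomogeneous (m + 1))
    (h : ∀ i, pderiv i φ = pderiv i ψ) : φ = ψ := by
  have := hφ.sum_X_mul_pderiv
  simp_rw [h, hψ.sum_X_mul_pderiv] at this
  exact (nsmul_right_injective m.succ_ne_zero this).symm

theorem existsUnique_isHomogeneous_pderiv_eq {m : ℕ} {g : σ → MvPolynomial σ K}
    (hg : ∀ i, (g i).IsHomogeneous m) (hclosed : ∀ i k, pderiv k (g i) = pderiv i (g k)) :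
    ∃! φ : MvPolynomial σ K, φ.IsHomogeneous (m + 1) ∧ ∀ k, pderiv k φ = g k := by
  set φ := C ((m : K) + 1)⁻¹ * ∑ i, X i * g i
  have hφ : φ.IsHomogeneous (m + 1) :=
    .C_mul (.sum _ _ _ fun i _ => add_comm m 1 ▸ (isHomogeneous_X K i).mul (hg i)) _
  have hdφ (k : σ) : pderiv k φ = g k := by
    rw [pderiv_C_mul, pderiv_sum_X_mul hclosed, (hg k).sum_X_mul_pderiv, ← succ_nsmul',
      nsmul_eq_mul, ← map_natCast C, ← mul_assoc, ← C_mul, Nat.cast_succ,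
      inv_mul_cancel₀ m.cast_add_one_ne_zero, C_1, one_mul]
  exact ⟨φ, ⟨hφ, hdφ⟩, fun ψ ⟨hψ, hdψ⟩ =>
    hψ.eq_of_pderiv_eq hφ fun k => (hdψ k).trans (hdφ k).symm⟩

end MvPolynomial

theorem exists_unique_homogeneous_potential_general
    (n s : ℕ)
    (f : Fin n → Fin n → MvPolynomial (Fin n) ℝ)
    (hhom : ∀ k l, (f k l).IsHomogeneous s)
    (hsym : ∀ i j, f i j = f j i)
    (hcomp : ∀ i j k, pderiv k (f i j) = pderiv i (f k j)) :
    ∃! u : MvPolynomial (Fin n) ℝ, u.IsHomogeneous (s + 2) ∧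
      ∀ k l, pderiv k (pderiv l u) = f k l := by
  have row l := existsUnique_isHomogeneous_pderiv_eq (fun k => hhom k l) (fun i k => hcomp i l k)
  choose v hv using fun l => (row l).exists
  obtain ⟨u, ⟨hu, hdu⟩, hu_unique⟩ := existsUnique_isHomogeneous_pderiv_eq
    (fun l => (hv l).1) (fun l k => by rw [(hv l).2, (hv k).2, hsym])
  refine ⟨u, ⟨hu, fun k l => by rw [hdu, (hv l).2]⟩, fun u' ⟨hu', hdu'⟩ =>
    hu_unique u' ⟨hu', fun l => (row l).unique ⟨hu'.pderiv, (hdu' · l)⟩ (hv l)⟩⟩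

/-- If a family `f k l` of homogeneous polynomials of degree `s` in `n` variables
satisfies the compatibility conditions `f i j = f j i` and `∂f i j/∂x^k = ∂f k j/∂x^i`,
then there is a unique homogeneous polynomial `u` of degree `s + 2` with
`∂²u/∂x^k∂x^l = f k l` for all `k, l`. -/
theorem exists_unique_homogeneous_potential
    (n s : ℕ) (hn : 1 ≤ n)
    (f : Fin n → Fin n → MvPolynomial (Fin n) ℝ)
    (hhom : ∀ k l, (f k l).IsHomogeneous s)
    (hsym : ∀ i j, f i j = f j i)
    (hcomp : ∀ i j k, pderiv k (f i j) = pderiv i (f k j)) :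
    ∃! u : MvPolynomial (Fin n) ℝ, u.IsHomogeneous (s + 2) ∧
      ∀ k l, pderiv k (pderiv l u) = f k l :=
  exists_unique_homogeneous_potential_general n s f hhom hsym hcomp
end

section
/- Let n ≥ 3. There exist real coefficients c_{ij}^{lm} (i,j,l,m ∈ {1,…,n}) with c_{ij}^{lm} = c_{ji}^{lm} such that the only matrix b = (b^k_s)_{k,s ∈ {1,…,n}} of real numbers satisfying the first-order compatibility system associated to c is b = 0. -/
open Finset

/-- The coefficients: `c i j l m = δ_{ij} δ_{lm} (m+1)`. -/
def Cfo (n : ℕ) (i j l m : Fin n) : ℝ :=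
  (if i = j then (1:ℝ) else 0) * (if l = m then ((m:ℕ):ℝ) + 1 else 0)

lemma Cfo_key {n : ℕ} (b : Fin n → Fin n → ℝ) (i p j l : Fin n) :
    ∑ k : Fin n,
      ((Cfo n i j l k - Cfo n k j l i) * b k p + (Cfo n k j l p - Cfo n p j l k) * b k i +
       (Cfo n p j k i - Cfo n i j k p) * b l k + (Cfo n i k l p - Cfo n p k l i) * b k j) =
    (if i = j then (((l:ℕ):ℝ) - ((p:ℕ):ℝ)) * b l p else 0)
    + (if p = j then (((i:ℕ):ℝ) - ((l:ℕ):ℝ)) * b l i else 0)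
    + (if l = p then (((p:ℕ):ℝ) + 1) * (b j i + b i j) else 0)
    - (if l = i then (((i:ℕ):ℝ) + 1) * (b j p + b p j) else 0) := by
  have step : ∀ k : Fin n,
      ((Cfo n i j l k - Cfo n k j l i) * b k p + (Cfo n k j l p - Cfo n p j l k) * b k i +
       (Cfo n p j k i - Cfo n i j k p) * b l k + (Cfo n i k l p - Cfo n p k l i) * b k j) =
      (if l = k then (if i = j then (((k:ℕ):ℝ) + 1) * b k p else 0) else 0)
      - (if k = j then (if l = i then (((i:ℕ):ℝ) + 1) * b k p else 0) else 0)
      + (if k = j then (if l = p then (((p:ℕ):ℝ) + 1) * b k i else 0) else 0)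
      - (if l = k then (if p = j then (((k:ℕ):ℝ) + 1) * b k i else 0) else 0)
      + (if k = i then (if p = j then (((i:ℕ):ℝ) + 1) * b l k else 0) else 0)
      - (if k = p then (if i = j then (((p:ℕ):ℝ) + 1) * b l k else 0) else 0)
      + (if i = k then (if l = p then (((p:ℕ):ℝ) + 1) * b k j else 0) else 0)
      - (if p = k then (if l = i then (((i:ℕ):ℝ) + 1) * b k j else 0) else 0) := by
    have s1 : ∀ k : Fin n, (Cfo n i j l k - Cfo n k j l i) * b k p =
        (if l = k then (if i = j then (((k:ℕ):ℝ) + 1) * b k p else 0) else 0)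
        - (if k = j then (if l = i then (((i:ℕ):ℝ) + 1) * b k p else 0) else 0) := by
      intro k; simp only [Cfo]; split_ifs <;> ring
    have s2 : ∀ k : Fin n, (Cfo n k j l p - Cfo n p j l k) * b k i =
        (if k = j then (if l = p then (((p:ℕ):ℝ) + 1) * b k i else 0) else 0)
        - (if l = k then (if p = j then (((k:ℕ):ℝ) + 1) * b k i else 0) else 0) := by
      intro k; simp only [Cfo]; split_ifs <;> ring
    have s3 : ∀ k : Fin n, (Cfo n p j k i - Cfo n i j k p) * b l k =
        (if k = i then (if p = j then (((i:ℕ):ℝ) + 1) * b l k else 0) else 0)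
        - (if k = p then (if i = j then (((p:ℕ):ℝ) + 1) * b l k else 0) else 0) := by
      intro k; simp only [Cfo]; split_ifs <;> ring
    have s4 : ∀ k : Fin n, (Cfo n i k l p - Cfo n p k l i) * b k j =
        (if i = k then (if l = p then (((p:ℕ):ℝ) + 1) * b k j else 0) else 0)
        - (if p = k then (if l = i then (((i:ℕ):ℝ) + 1) * b k j else 0) else 0) := by
      intro k; simp only [Cfo]; split_ifs <;> ring
    intro k
    rw [s1 k, s2 k, s3 k, s4 k]
    ring
  rw [Finset.sum_congr rfl fun k _ => step k]
  simp only [Finset.sum_add_distrib, Finset.sum_sub_distrib, Finset.sum_ite_eq,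
    Finset.sum_ite_eq', Finset.mem_univ, if_true]
  split_ifs <;> ring

/-- For `n ≥ 3` there exist coefficients `c i j l m` (symmetric in `i, j`) such that
the only matrix `b` satisfying the first-order compatibility system associated to `c`
is `b = 0`. -/
theorem exists_coeffs_first_order_system_nondegenerate
    (n : ℕ) (hn : 3 ≤ n) :
    ∃ c : Fin n → Fin n → Fin n → Fin n → ℝ,
      (∀ i j l m, c i j l m = c j i l m) ∧
      ∀ b : Fin n → Fin n → ℝ,
        (∀ i p : Fin n, i < p → ∀ j l : Fin n,
          ∑ k : Fin n,
            ((c i j l k - c k j l i) * b k p + (c k j l p - c p j l k) * b k i +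
             (c p j k i - c i j k p) * b l k + (c i k l p - c p k l i) * b k j) = 0) →
        b = 0 := by
  refine ⟨Cfo n, ?_, ?_⟩
  · intro i j l m
    by_cases h : i = j
    · simp [Cfo, h]
    · have h' : ¬ j = i := fun hh => h hh.symm
      simp [Cfo, h, h']
  · intro b hb
    have E : ∀ i p : Fin n, i < p → ∀ j l : Fin n,
        (if i = j then (((l:ℕ):ℝ) - ((p:ℕ):ℝ)) * b l p else 0)
        + (if p = j then (((i:ℕ):ℝ) - ((l:ℕ):ℝ)) * b l i else 0)
        + (if l = p then (((p:ℕ):ℝ) + 1) * (b j i + b i j) else 0)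
        - (if l = i then (((i:ℕ):ℝ) + 1) * (b j p + b p j) else 0) = 0 := by
      intro i p h j l
      rw [← Cfo_key b i p j l]
      exact hb i p h j l
    -- helper: casts
    have hcast : ∀ u v : Fin n, u ≠ v → (((u:ℕ):ℝ) - ((v:ℕ):ℝ)) ≠ 0 := by
      intro u v huv h
      have : ((u:ℕ):ℝ) = ((v:ℕ):ℝ) := by linarith
      exact huv (Fin.ext (by exact_mod_cast this))
    -- off-diagonal route A : i < s, i ≠ l  ⟹  b l s = 0
    have routeA : ∀ l s i : Fin n, l ≠ s → i < s → i ≠ l → b l s = 0 := by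
      intro l s i hls his hil
      have h1 := E i s his i l
      rw [if_pos rfl, if_neg (Fin.ne_of_lt his).symm, if_neg hls,
        if_neg (fun h : l = i => hil h.symm)] at h1
      have h2 : (((l:ℕ):ℝ) - ((s:ℕ):ℝ)) * b l s = 0 := by linarith
      rcases mul_eq_zero.mp h2 with h | h
      · exact absurd h (hcast l s hls)
      · exact h
    -- off-diagonal route B : s < p, p ≠ l  ⟹  b l s = 0
    have routeB : ∀ l s p : Fin n, l ≠ s → s < p → p ≠ l → b l s = 0 := by
      intro l s p hls hsp hpl
      have h1 := E s p hsp p l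
      rw [if_neg (Fin.ne_of_lt hsp), if_pos rfl, if_neg (fun h : l = p => hpl h.symm),
        if_neg hls] at h1
      have h2 : (((s:ℕ):ℝ) - ((l:ℕ):ℝ)) * b l s = 0 := by linarith
      rcases mul_eq_zero.mp h2 with h | h
      · exact absurd h (hcast s l (fun h => hls h.symm))
      · exact h
    -- diagonal route A : i < p ⟹ b i i = 0   (instance j = i, l = p)
    have diagA : ∀ i p : Fin n, i < p → b i i = 0 := by
      intro i p h
      have h1 := E i p h i p
      rw [if_pos rfl, if_neg (Fin.ne_of_lt h).symm, if_pos rfl,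
        if_neg (Fin.ne_of_lt h).symm] at h1
      have hp : (0:ℝ) < ((p:ℕ):ℝ) + 1 := by positivity
      nlinarith [h1]
    -- diagonal route B : i < p ⟹ b p p = 0   (instance j = p, l = i)
    have diagB : ∀ i p : Fin n, i < p → b p p = 0 := by
      intro i p h
      have h1 := E i p h p i
      rw [if_neg (Fin.ne_of_lt h), if_pos rfl, if_neg (Fin.ne_of_lt h),
        if_pos rfl] at h1
      have hp : (0:ℝ) < ((i:ℕ):ℝ) + 1 := by positivity
      nlinarith [h1]
    -- the three small indices
    have h0n : 0 < n := by omega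
    have h1n : 1 < n := by omega
    have h2n : 2 < n := by omega
    set z : Fin n := ⟨0, h0n⟩ with hz
    set o : Fin n := ⟨1, h1n⟩ with ho
    set t : Fin n := ⟨2, h2n⟩ with ht
    funext l s
    show b l s = 0
    by_cases hls : l = s
    · -- diagonal
      subst hls
      by_cases hs0 : (l : ℕ) = 0
      · exact diagA l o (by rw [Fin.lt_def]; simp [ho, hs0])
      · exact diagB z l (by rw [Fin.lt_def]; simp [hz]; omega)
    · -- off-diagonal
      by_cases hs0 : (s : ℕ) = 0
      · -- route B with p = o or t
        have hl0 : (l : ℕ) ≠ 0 := by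
          intro h; exact hls (Fin.ext (by omega))
        by_cases hl1 : (l : ℕ) = 1
        · exact routeB l s t hls (by rw [Fin.lt_def]; simp [ht]; omega)
            (fun h => by rw [ht] at h; apply_fun Fin.val at h; simp at h; omega)
        · exact routeB l s o hls (by rw [Fin.lt_def]; simp [ho]; omega)
            (fun h => by rw [ho] at h; apply_fun Fin.val at h; simp at h; omega)
      · by_cases hl0 : (l : ℕ) = 0
        · by_cases hs1 : (s : ℕ) = 1
          · exact routeB l s t hls (by rw [Fin.lt_def]; simp [ht]; omega)
              (fun h => by rw [ht] at h; apply_fun Fin.val at h; simp at h; omega)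
          · exact routeA l s o hls (by rw [Fin.lt_def]; simp [ho]; omega)
              (fun h => by rw [ho] at h; apply_fun Fin.val at h; simp at h; omega)
        · exact routeA l s z hls (by rw [Fin.lt_def]; simp [hz]; omega)
            (fun h => by rw [hz] at h; apply_fun Fin.val at h; simp at h; omega)
end

section
/- Let n ≥ 3, and let S be the real vector space of families c = (c_{ij}^{lm})_{i,j,l,m ∈ {1,…,n}} with c_{ij}^{lm} = c_{ji}^{lm}, equipped with its natural (Euclidean/product) topology. Then the set of c ∈ S for which the only matrix b = (b^k_s) satisfying the first-order compatibility system associated to c is b = 0, is open and dense in S. -/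
/-!
The system is linear in `b`, with a coefficient matrix `M c` depending linearly on `c`, so `c` is
nondegenerate iff `M c` is injective, i.e. iff `det ((M c)ᵀ * M c) ≠ 0`: an open condition. On the
line `t ↦ c₀ + t • (c₁ - c₀)` this determinant is a polynomial in `t`; if `c₁` is nondegenerate it
does not vanish at `t = 1`, hence vanishes only at finitely many `t`, and `c₀` is a limit of
nondegenerate families. For `n ≥ 3` the family `(i+1) δᵢˡ δⱼᵐ + (j+1) δⱼˡ δᵢᵐ` is nondegenerate:
the equations with `l = i` and `i` distinct from `j, p` (a third index) make `b` antisymmetric,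
and then those with `j = l = i` kill it, since the weights `i + 1` are distinct.
-/

open Finset

/-- The space of families `c i j l m` of real coefficients symmetric in the lower
indices `i, j`. -/
def SymCoeffs (n : ℕ) : Type :=
  {c : Fin n → Fin n → Fin n → Fin n → ℝ // ∀ i j l m, c i j l m = c j i l m}

instance (n : ℕ) : TopologicalSpace (SymCoeffs n) :=
  instTopologicalSpaceSubtype

/-- The set of coefficient families `c` for which the only matrix `b` satisfying the
first-order compatibility system associated to `c` is `b = 0`. -/
def NondegenerateSet (n : ℕ) : Set (SymCoeffs n) :=
  {c | ∀ b : Fin n → Fin n → ℝ,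
    (∀ i p : Fin n, i < p → ∀ j l : Fin n,
      ∑ k : Fin n,
        ((c.1 i j l k - c.1 k j l i) * b k p + (c.1 k j l p - c.1 p j l k) * b k i +
         (c.1 p j k i - c.1 i j k p) * b l k + (c.1 i k l p - c.1 p k l i) * b k j) = 0) →
    b = 0}

open Function Polynomial

namespace Matrix

variable {m n R : Type*} [Fintype m] [Fintype n] [Field R] [LinearOrder R] [IsStrictOrderedRing R]

theorem injective_mulVec_iff_det_transpose_mul_self_ne_zero [DecidableEq n] (A : Matrix m n R) :
    Injective A.mulVec ↔ (Aᵀ * A).det ≠ 0 := by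
  rw [← isUnit_iff_ne_zero, ← isUnit_iff_isUnit_det, ← mulVec_injective_iff_isUnit,
    ← coe_mulVecLin, ← coe_mulVecLin, ← LinearMap.ker_eq_bot, ← LinearMap.ker_eq_bot,
    ker_mulVecLin_transpose_mul_self]

theorem isOpen_setOf_injective_mulVec [TopologicalSpace R] [IsTopologicalRing R] [T1Space R] :
    IsOpen {A : Matrix m n R | Injective A.mulVec} := by
  classical
  simp_rw [injective_mulVec_iff_det_transpose_mul_self_ne_zero]
  exact isOpen_compl_singleton.preimage
    ((continuous_id.matrix_transpose.matrix_mul continuous_id).matrix_det)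

theorem finite_setOf_not_injective_mulVec_add_smul (A B : Matrix m n R) {t₀ : R}
    (h : Injective (A + t₀ • B).mulVec) :
    {t : R | ¬ Injective (A + t • B).mulVec}.Finite := by
  classical
  set P : Matrix m n R[X] := A.map C + (X : R[X]) • B.map C
  have eval_P (t : R) : P.map (eval t) = A + t • B := by
    ext
    simp only [P, map_apply, add_apply, smul_apply, smul_eq_mul, eval_add, eval_C, eval_mul, eval_X]
  have eval_det (t : R) : (Pᵀ * P).det.eval t = ((A + t • B)ᵀ * (A + t • B)).det := by
    rw [← coe_evalRingHom, RingHom.map_det, RingHom.mapMatrix_apply, Matrix.map_mul, transpose_map,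
      coe_evalRingHom, eval_P]
  have hP : (Pᵀ * P).det ≠ 0 := fun h0 => by
    rw [injective_mulVec_iff_det_transpose_mul_self_ne_zero, ← eval_det, h0, eval_zero] at h
    exact h rfl
  refine (finite_setOfPred_isRoot hP).subset fun t (ht : ¬ Injective _) => ?_
  rwa [injective_mulVec_iff_det_transpose_mul_self_ne_zero, not_not, ← eval_det] at ht

end Matrix

open Matrix

variable {n : ℕ}

def compatLhs (c : Fin n → Fin n → Fin n → Fin n → ℝ) (b : Fin n → Fin n → ℝ)
    (i p j l : Fin n) : ℝ :=
  ∑ k : Fin n,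
    ((c i j l k - c k j l i) * b k p + (c k j l p - c p j l k) * b k i +
     (c p j k i - c i j k p) * b l k + (c i k l p - c p k l i) * b k j)

theorem compatLhs_swap (c : Fin n → Fin n → Fin n → Fin n → ℝ) (b : Fin n → Fin n → ℝ)
    (i p j l : Fin n) : compatLhs c b p i j l = -compatLhs c b i p j l := by
  rw [compatLhs, compatLhs, ← sum_neg_distrib]
  exact sum_congr rfl fun _ _ => by ring

theorem forall_lt_compatLhs_eq_zero_iff (c : Fin n → Fin n → Fin n → Fin n → ℝ)
    (b : Fin n → Fin n → ℝ) :
    (∀ i p, i < p → ∀ j l, compatLhs c b i p j l = 0) ↔ ∀ i p j l, compatLhs c b i p j l = 0 := by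
  refine ⟨fun h i p j l => ?_, fun h i p _ j l => h i p j l⟩
  rcases lt_trichotomy i p with hip | rfl | hpi
  · exact h i p hip j l
  · linarith [compatLhs_swap c b i i j l]
  · rw [compatLhs_swap, h p i hpi, neg_zero]

def compatBilin : (Fin n → Fin n → Fin n → Fin n → ℝ) →ₗ[ℝ]
    (Fin n × Fin n → ℝ) →ₗ[ℝ] (Fin n × Fin n × Fin n × Fin n → ℝ) :=
  LinearMap.mk₂ ℝ (fun c b r => compatLhs c (curry b) r.1 r.2.1 r.2.2.1 r.2.2.2)
    (by intros; ext; simp only [compatLhs, Pi.add_apply, ← sum_add_distrib]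
        exact sum_congr rfl fun _ _ => by ring)
    (by intros; ext; simp only [compatLhs, Pi.smul_apply, smul_eq_mul, mul_sum]
        exact sum_congr rfl fun _ _ => by ring)
    (by intros; ext; simp only [compatLhs, curry, Pi.add_apply, ← sum_add_distrib]
        exact sum_congr rfl fun _ _ => by ring)
    (by intros; ext; simp only [compatLhs, curry, Pi.smul_apply, smul_eq_mul, mul_sum]
        exact sum_congr rfl fun _ _ => by ring)

def compatMatrix : (Fin n → Fin n → Fin n → Fin n → ℝ) →ₗ[ℝ]
    Matrix (Fin n × Fin n × Fin n × Fin n) (Fin n × Fin n) ℝ :=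
  LinearMap.toMatrix'.toLinearMap ∘ₗ compatBilin

theorem compatMatrix_mulVec (c : Fin n → Fin n → Fin n → Fin n → ℝ) (v : Fin n × Fin n → ℝ) :
    compatMatrix c *ᵥ v = fun r => compatLhs c (curry v) r.1 r.2.1 r.2.2.1 r.2.2.2 :=
  LinearMap.toMatrix'_mulVec _ _

theorem mem_nondegenerateSet_iff_forall_compatLhs (c : SymCoeffs n) :
    c ∈ NondegenerateSet n ↔ ∀ b, (∀ i p j l, compatLhs c.1 b i p j l = 0) → b = 0 := by
  simp_rw [← forall_lt_compatLhs_eq_zero_iff]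
  rfl

theorem mem_nondegenerateSet_iff (c : SymCoeffs n) :
    c ∈ NondegenerateSet n ↔ Injective (compatMatrix c.1).mulVec := by
  rw [mem_nondegenerateSet_iff_forall_compatLhs, ← coe_mulVecLin, injective_iff_map_eq_zero]
  refine (Equiv.curry _ _ _).symm.forall_congr fun {b} => ?_
  simp [compatMatrix_mulVec, funext_iff]

theorem isOpen_nondegenerateSet : IsOpen (NondegenerateSet n) := by
  rw [show NondegenerateSet n = (fun c : SymCoeffs n => compatMatrix c.1) ⁻¹'
      {A | Injective A.mulVec} from Set.ext mem_nondegenerateSet_iff]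
  exact isOpen_setOf_injective_mulVec.preimage
    (compatMatrix.continuous_of_finiteDimensional.comp continuous_subtype_val)

theorem dense_nondegenerateSet_of_mem {c₁ : SymCoeffs n} (h₁ : c₁ ∈ NondegenerateSet n) :
    Dense (NondegenerateSet n) := by
  intro c₀
  let γ : ℝ → SymCoeffs n := fun t =>
    ⟨c₀.1 + t • (c₁.1 - c₀.1), fun i j l m => by simp [c₀.2 i j l m, c₁.2 i j l m]⟩
  have hγ : Continuous γ := by fun_prop
  have hγ₀ : γ 0 = c₀ := Subtype.ext (by simp [γ])
  have mem_iff (t : ℝ) : γ t ∈ NondegenerateSet n ↔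
      Injective (compatMatrix c₀.1 + t • (compatMatrix c₁.1 - compatMatrix c₀.1)).mulVec := by
    rw [mem_nondegenerateSet_iff, map_add, map_smul, map_sub]
  have bad_finite : {t | γ t ∉ NondegenerateSet n}.Finite := by
    simp_rw [mem_iff]
    refine finite_setOf_not_injective_mulVec_add_smul _ _ (t₀ := 1) ?_
    rwa [one_smul, add_sub_cancel, ← mem_nondegenerateSet_iff]
  exact hγ₀ ▸ map_mem_closure hγ (bad_finite.countable.dense_compl ℝ 0) fun _ => not_not.mp

def starCoeffs (n : ℕ) : SymCoeffs n :=
  ⟨fun i j l m => (if i = l ∧ j = m then (i + 1 : ℝ) else 0) +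
    (if j = l ∧ i = m then (j + 1 : ℝ) else 0), fun _ _ _ _ => add_comm _ _⟩

theorem compatLhs_starCoeffs {i p : Fin n} (hip : i ≠ p) (b : Fin n → Fin n → ℝ) (j l : Fin n) :
    compatLhs (starCoeffs n).1 b i p j l =
      (if i = l then (i + 1 : ℝ) else 0) * (b j p + b p j)
      - (if p = l then (p + 1 : ℝ) else 0) * (b j i + b i j)
      + (if j = p then (l - i : ℝ) else 0) * b l i + (if j = i then (p - l : ℝ) else 0) * b l p := by
  simp only [compatLhs, starCoeffs, sub_mul, add_mul, ite_mul, zero_mul, sum_add_distrib,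
    sum_sub_distrib, ite_and]
  simp only [one_mul, sum_ite_irrel, sum_ite_eq, sum_ite_eq', mem_univ, ↓reduceIte, sum_const_zero,
    add_sub_add_right_eq_sub, ite_self, add_zero, hip, hip.symm]
  split_ifs <;> ring

theorem starCoeffs_mem_nondegenerateSet (hn : 3 ≤ n) : starCoeffs n ∈ NondegenerateSet n := by
  refine (mem_nondegenerateSet_iff_forall_compatLhs _).2 fun b hb => ?_
  have add_swap_eq_zero (j p : Fin n) : b j p + b p j = 0 := by
    obtain ⟨i, hij, hip⟩ := Fin.exists_ne_and_ne_of_two_lt j p hn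
    have := hb i p j i
    rw [compatLhs_starCoeffs hip] at this
    simpa [hij.symm, hip.symm, hij, (by positivity : (i + 1 : ℝ) ≠ 0)] using this
  have off_diag {i p : Fin n} (hip : i ≠ p) : b i p = 0 := by
    have := hb i p i i
    rw [compatLhs_starCoeffs hip, add_swap_eq_zero] at this
    simpa [hip, hip.symm, sub_eq_zero, Fin.val_inj] using this
  ext i p
  rw [Pi.zero_apply, Pi.zero_apply]
  rcases eq_or_ne i p with rfl | hip
  · linarith [add_swap_eq_zero i i]
  · exact off_diag hip

/-- For `n ≥ 3`, the set of coefficient families `c` whose associated first-order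
compatibility system forces `b = 0` is open and dense in the space of symmetric
coefficient families. -/
theorem nondegenerateSet_isOpen_and_dense (n : ℕ) (hn : 3 ≤ n) :
    IsOpen (NondegenerateSet n) ∧ Dense (NondegenerateSet n) :=
  ⟨isOpen_nondegenerateSet, dense_nondegenerateSet_of_mem (starCoeffs_mem_nondegenerateSet hn)⟩
end

section
/- For all real numbers u, v, w, z, the 4×4 real matrix M(u,v,w,z) with rows (u, u, v, w), (z, z, −v, −w), (−2w, 0, z−u, 0), (0, 2v, 0, u−z) has rank at most 3; moreover, there exist real numbers u, v, w, z for which the rank of M(u,v,w,z) is exactly 3. -/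
/-!
The determinant of `M(u,v,w,z)` vanishes identically, so the rank is never full; at
`(u,v,w,z) = (1,1,1,0)` the `3 × 3` minor on rows `0,2,3` and columns `0,1,2` is `-2`.
-/

open Matrix

namespace Matrix

variable {n : Type*} [Fintype n]

theorem rank_lt_card_of_det_eq_zero [DecidableEq n] {K : Type*} [Field K] {A : Matrix n n K}
    (h : A.det = 0) : A.rank < Fintype.card n := by
  obtain ⟨v, hv, hAv⟩ := exists_mulVec_eq_zero_iff.mpr h
  have hker : 0 < Module.finrank K (LinearMap.ker A.mulVecLin) :=
    Module.finrank_pos_iff_exists_ne_zero.mpr ⟨⟨v, hAv⟩, by simpa [Subtype.ext_iff] using hv⟩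
  have hrank := A.mulVecLin.finrank_range_add_finrank_ker
  rw [Module.finrank_fintype_fun_eq_card] at hrank
  rw [rank]
  omega

theorem card_le_rank_of_det_submatrix_ne_zero {R m k : Type*} [CommRing R] [IsDomain R]
    [Fintype k] [DecidableEq k] (A : Matrix m n R) (r : k → m) (c : k → n)
    (h : (A.submatrix r c).det ≠ 0) : Fintype.card k ≤ A.rank :=
  (rank_of_det_ne_zero h).symm.le.trans (rank_submatrix_le A r c)

end Matrix

section FirstJet

variable {K : Type*} [Field K]

def firstJetMatrix (u v w z : K) : Matrix (Fin 4) (Fin 4) K :=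
  !![u, u, v, w;
     z, z, -v, -w;
     -2*w, 0, z - u, 0;
     0, 2*v, 0, u - z]

theorem det_firstJetMatrix (u v w z : K) : (firstJetMatrix u v w z).det = 0 := by
  simp [firstJetMatrix, det_succ_row_zero, Fin.sum_univ_succ, Fin.succAbove]
  ring

theorem rank_firstJetMatrix_le (u v w z : K) : (firstJetMatrix u v w z).rank ≤ 3 :=
  Nat.le_of_lt_succ (by simpa using rank_lt_card_of_det_eq_zero (det_firstJetMatrix u v w z))

theorem det_submatrix_firstJetMatrix_one_one_one_zero :
    ((firstJetMatrix (1 : ℝ) 1 1 0).submatrix ![0, 2, 3] ![0, 1, 2]).det = -2 := by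
  rw [det_fin_three]
  simp only [firstJetMatrix, of_apply, submatrix_apply, cons_val', cons_val_zero, cons_val_one,
    cons_val, cons_val_fin_one]
  norm_num

theorem rank_firstJetMatrix_one_one_one_zero :
    (firstJetMatrix (1 : ℝ) 1 1 0).rank = 3 := by
  refine (rank_firstJetMatrix_le _ _ _ _).antisymm ?_
  simpa using card_le_rank_of_det_submatrix_ne_zero _ ![0, 2, 3] ![0, 1, 2]
    (by rw [det_submatrix_firstJetMatrix_one_one_one_zero]; norm_num)

end FirstJet

/-- The 4×4 matrix arising from the `n = 2` first-jet compatibility system always has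
rank at most 3, and generically has rank exactly 3. -/
theorem first_jet_matrix_rank :
    (∀ u v w z : ℝ,
      Matrix.rank !![u, u, v, w;
                     z, z, -v, -w;
                     -2*w, 0, z - u, 0;
                     0, 2*v, 0, u - z] ≤ 3) ∧
    (∃ u v w z : ℝ,
      Matrix.rank !![u, u, v, w;
                     z, z, -v, -w;
                     -2*w, 0, z - u, 0;
                     0, 2*v, 0, u - z] = 3) :=
  ⟨rank_firstJetMatrix_le, ⟨1, 1, 1, 0, rank_firstJetMatrix_one_one_one_zero⟩⟩
end

section
/- There exist real coefficients d^l_{ijst} (l,i,j,s,t ∈ {1,2}) with d^l_{ijst} = d^l_{jist} and d^l_{ijst} = d^l_{ijts}, such that the only matrix b = (b^k_s)_{k,s ∈ {1,2}} of real numbers satisfying the second-order compatibility system associated to d is b = 0. -/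
open Finset

/-- There exist coefficients `d l i j s t` (indices in `Fin 2`, where `0` and `1`
represent the paper's indices `1` and `2`), symmetric in `i, j` and in `s, t`,
such that the only matrix `b` satisfying the second-order compatibility system
associated to `d` is `b = 0`. -/
theorem exists_coeffs_second_order_system_nondegenerate :
    ∃ d : Fin 2 → Fin 2 → Fin 2 → Fin 2 → Fin 2 → ℝ,
      (∀ l i j s t, d l i j s t = d l j i s t) ∧
      (∀ l i j s t, d l i j s t = d l i j t s) ∧
      ∀ b : Fin 2 → Fin 2 → ℝ,
        (∀ j l t : Fin 2,
          ∑ k : Fin 2,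
            ((d l k j 1 t - d l 1 j k t) * b k 0 + (d l 0 j k t - d l k j 0 t) * b k 1 +
             (d l 0 j k 1 - d l 1 j k 0) * b k t + (d k 1 j 0 t - d k 0 j 1 t) * b l k +
             (d l 0 k 1 t - d l 1 k 0 t) * b k j) = 0) →
        b = 0 := by
  refine ⟨fun l i j s t => (![![![![![0, 0], ![0, 1]], ![![0, 1], ![1, 1]]], ![![![0, 1], ![1, 1]], ![![1, 1], ![1, 0]]]], ![![![![0, 1], ![1, 0]], ![![1, 1], ![1, 0]]], ![![![1, 1], ![1, 0]], ![![1, 1], ![1, 0]]]]] : Fin 2 → Fin 2 → Fin 2 → Fin 2 → Fin 2 → ℝ) l i j s t, ?_, ?_, ?_⟩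
  · intro l i j s t
    fin_cases l <;> fin_cases i <;> fin_cases j <;> fin_cases s <;> fin_cases t <;> norm_num
  · intro l i j s t
    fin_cases l <;> fin_cases i <;> fin_cases j <;> fin_cases s <;> fin_cases t <;> norm_num
  · intro b hb
    have h1 := hb 0 0 1
    have h2 := hb 0 1 0
    have h3 := hb 0 1 1
    have h4 := hb 1 1 1
    simp only [Fin.sum_univ_two] at h1 h2 h3 h4
    norm_num at h1 h2 h3 h4
    funext k s
    fin_cases k <;> fin_cases s <;> simp <;> linarith
end

section
/- Let S be the real vector space of families d = (d^l_{ijst})_{l,i,j,s,t ∈ {1,2}} with d^l_{ijst} = d^l_{jist} and d^l_{ijst} = d^l_{ijts}, equipped with its natural (Euclidean/product) topology. Then the set of d ∈ S for which the only matrix b = (b^k_s)_{k,s ∈ {1,2}} satisfying the second-order compatibility system associated to d is b = 0, is open and dense in S. -/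
open Finset

/-- The space of families `d l i j s t` of real coefficients (indices in `Fin 2`,
where `0` and `1` represent the paper's indices `1` and `2`), symmetric in the lower
indices `i, j` and in the lower indices `s, t`. -/
def SymCoeffs2 : Type :=
  {d : Fin 2 → Fin 2 → Fin 2 → Fin 2 → Fin 2 → ℝ //
    (∀ l i j s t, d l i j s t = d l j i s t) ∧ (∀ l i j s t, d l i j s t = d l i j t s)}

instance : TopologicalSpace SymCoeffs2 :=
  instTopologicalSpaceSubtype

/-- The set of coefficient families `d` for which the only matrix `b` satisfying the
second-order compatibility system associated to `d` is `b = 0`. -/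
def NondegenerateSet2 : Set SymCoeffs2 :=
  {d | ∀ b : Fin 2 → Fin 2 → ℝ,
    (∀ j l t : Fin 2,
      ∑ k : Fin 2,
        ((d.1 l k j 1 t - d.1 l 1 j k t) * b k 0 + (d.1 l 0 j k t - d.1 l k j 0 t) * b k 1 +
         (d.1 l 0 j k 1 - d.1 l 1 j k 0) * b k t + (d.1 k 1 j 0 t - d.1 k 0 j 1 t) * b l k +
         (d.1 l 0 k 1 t - d.1 l 1 k 0 t) * b k j) = 0) →
    b = 0}

/-!
The system is linear in `b` with coefficients linear in `d`: it reads `A d *ᵥ b = 0` for an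
`8 × 4` matrix `A d` depending linearly on `d`. Hence `d` is nondegenerate iff the Gram
determinant `det ((A d)ᵀ * A d)` is nonzero, which is an open condition. For density, fix an
explicit nondegenerate `e`. On the line `t ↦ x + t • e` the Gram determinant vanishes for only
finitely many `t`: for `t ≠ 0` it equals `t ^ 8 * q t⁻¹`, where `q s` is the Gram determinant
at `e + s • x`, a polynomial in `s` with `q 0 ≠ 0`.
-/

open Matrix Polynomial

section TransposeMulSelf

variable {m n R : Type*} [Fintype m] [Fintype n] [DecidableEq n]

theorem Matrix.det_transpose_mul_self_ne_zero_iff [Field R] [LinearOrder R]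
    [IsStrictOrderedRing R] (A : Matrix m n R) :
    (Aᵀ * A).det ≠ 0 ↔ ∀ v, A *ᵥ v = 0 → v = 0 := by
  have hker (v : n → R) : (Aᵀ * A) *ᵥ v = 0 ↔ A *ᵥ v = 0 :=
    SetLike.ext_iff.1 (ker_mulVecLin_transpose_mul_self A) v
  rw [Ne, ← exists_mulVec_eq_zero_iff]
  simp only [hker]
  grind

theorem Matrix.finite_setOf_det_transpose_mul_self_add_smul_eq_zero [Field R] (M N : Matrix m n R)
    (hN : (Nᵀ * N).det ≠ 0) :
    {t : R | ((M + t • N)ᵀ * (M + t • N)).det = 0}.Finite := by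
  set B : Matrix m n R[X] := N.map C + (X : R[X]) • M.map C
  have hB (s : R) : eval s (Bᵀ * B).det = ((N + s • M)ᵀ * (N + s • M)).det := by
    rw [← coe_evalRingHom, RingHom.map_det, RingHom.mapMatrix_apply, Matrix.map_mul,
      transpose_map]
    congr <;> ext <;> simp [B] <;> ring
  have hB0 : (Bᵀ * B).det ≠ 0 := fun h => hN (by simpa [h] using (hB 0).symm)
  refine (((finite_setOfPred_isRoot hB0).image (·⁻¹)).insert 0).subset fun t ht => ?_
  rcases eq_or_ne t 0 with rfl | ht0
  · exact Set.mem_insert _ _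
  · refine Set.mem_insert_of_mem _ ⟨t⁻¹, ?_, inv_inv t⟩
    have hline : M + t • N = t • (N + t⁻¹ • M) := by
      rw [smul_add, smul_smul, mul_inv_cancel₀ ht0, one_smul, add_comm]
    rw [Set.mem_ofPred_eq, hline, transpose_smul, smul_mul, Matrix.mul_smul, smul_smul,
      det_smul] at ht
    simpa [IsRoot, hB, ht0] using ht

end TransposeMulSelf

abbrev Coeffs2 : Type := Fin 2 → Fin 2 → Fin 2 → Fin 2 → Fin 2 → ℝ

def compatSystem2 :
    Coeffs2 →ₗ[ℝ] (Fin 2 × Fin 2 → ℝ) →ₗ[ℝ] (Fin 2 × Fin 2 × Fin 2 → ℝ) :=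
  LinearMap.mk₂ ℝ
    (fun d b r =>
      let (j, l, t) := r
      ∑ k : Fin 2,
        ((d l k j 1 t - d l 1 j k t) * b (k, 0) + (d l 0 j k t - d l k j 0 t) * b (k, 1) +
         (d l 0 j k 1 - d l 1 j k 0) * b (k, t) + (d k 1 j 0 t - d k 0 j 1 t) * b (l, k) +
         (d l 0 k 1 t - d l 1 k 0 t) * b (k, j)))
    (fun _ _ _ => by ext; simp only [Fin.sum_univ_two, Pi.add_apply]; ring)
    (fun _ _ _ => by ext; simp only [Fin.sum_univ_two, Pi.smul_apply, smul_eq_mul]; ring)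
    (fun _ _ _ => by ext; simp only [Fin.sum_univ_two, Pi.add_apply]; ring)
    (fun _ _ _ => by ext; simp only [Fin.sum_univ_two, Pi.smul_apply, smul_eq_mul]; ring)

def compatMatrix2 : Coeffs2 →ₗ[ℝ] Matrix (Fin 2 × Fin 2 × Fin 2) (Fin 2 × Fin 2) ℝ :=
  LinearMap.toMatrix'.toLinearMap ∘ₗ compatSystem2

theorem mem_nondegenerateSet2_iff (d : SymCoeffs2) :
    d ∈ NondegenerateSet2 ↔ ((compatMatrix2 d.1)ᵀ * compatMatrix2 d.1).det ≠ 0 := by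
  rw [det_transpose_mul_self_ne_zero_iff, (Equiv.curry _ _ _).forall_congr_left]
  simp only [compatMatrix2, LinearMap.coe_comp, LinearEquiv.coe_coe, Function.comp_apply,
    LinearMap.toMatrix'_mulVec]
  refine forall_congr' fun b => imp_congr ?_ ?_
  · simp only [compatSystem2, LinearMap.mk₂_apply, funext_iff, Prod.forall]
    rfl
  · simp only [funext_iff, Prod.forall]
    rfl

def SymCoeffs2.addSMul (x e : SymCoeffs2) (t : ℝ) : SymCoeffs2 :=
  ⟨x.1 + t • e.1,
    fun l i j s u => by simp only [Pi.add_apply, Pi.smul_apply, x.2.1 l i j s u, e.2.1 l i j s u],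
    fun l i j s u => by simp only [Pi.add_apply, Pi.smul_apply, x.2.2 l i j s u, e.2.2 l i j s u]⟩

set_option synthInstance.maxHeartbeats 200000 in
theorem SymCoeffs2.continuous_addSMul (x e : SymCoeffs2) : Continuous (x.addSMul e) :=
  Continuous.subtype_mk (by fun_prop) _

@[simp]
theorem SymCoeffs2.addSMul_val (x e : SymCoeffs2) (t : ℝ) :
    (x.addSMul e t).1 = x.1 + t • e.1 :=
  rfl

@[simp]
theorem SymCoeffs2.addSMul_zero (x e : SymCoeffs2) : x.addSMul e 0 = x :=
  Subtype.ext (by simp)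

-- For this `d` the system contains `b 1 0 = 0`, `b 0 1 = 0`, `2 * b 0 0 + b 1 1 = b 1 0` and
-- `b 0 0 + 2 * b 1 1 = b 0 1`.
def nondegenerateWitness2 : SymCoeffs2 :=
  ⟨fun _ i j s t => if i = 0 ∧ j = 0 ∧ s = 1 ∧ t = 1 then 1 else 0,
    fun _ _ _ _ _ => by simp only [and_left_comm],
    fun _ _ _ _ _ => by simp only [and_comm]⟩

theorem nondegenerateWitness2_mem : nondegenerateWitness2 ∈ NondegenerateSet2 := by
  intro b hb
  have h000 := hb 0 0 0
  have h001 := hb 0 0 1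
  have h011 := hb 0 1 1
  have h101 := hb 1 0 1
  simp +decide only [nondegenerateWitness2, Fin.sum_univ_two, ↓reduceIte] at h000 h001 h011 h101
  have hb0 : b 0 0 = 0 ∧ b 0 1 = 0 ∧ b 1 0 = 0 ∧ b 1 1 = 0 := by
    refine ⟨?_, ?_, ?_, ?_⟩ <;> linarith
  ext a s
  fin_cases a <;> fin_cases s <;> simp [hb0]

theorem dense_preimage_addSMul_nondegenerateSet2 (x : SymCoeffs2) :
    Dense (x.addSMul nondegenerateWitness2 ⁻¹' NondegenerateSet2) := by
  have hw := (mem_nondegenerateSet2_iff _).1 nondegenerateWitness2_mem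
  have hfin := finite_setOf_det_transpose_mul_self_add_smul_eq_zero (compatMatrix2 x.1) _ hw
  convert hfin.countable.dense_compl ℝ using 1
  ext t
  simp [mem_nondegenerateSet2_iff]

/-- The set of coefficient families `d` whose associated second-order compatibility
system forces `b = 0` is open and dense. -/
theorem nondegenerateSet2_isOpen_and_dense :
    IsOpen NondegenerateSet2 ∧ Dense NondegenerateSet2 := by
  constructor
  · have hA : Continuous fun d : SymCoeffs2 => compatMatrix2 d.1 :=
      (LinearMap.continuous_of_finiteDimensional _).comp continuous_subtype_val
    rw [show NondegenerateSet2 = {d | ((compatMatrix2 d.1)ᵀ * compatMatrix2 d.1).det ≠ 0} from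
      Set.ext mem_nondegenerateSet2_iff]
    exact isOpen_ne_fun (hA.matrix_transpose.matrix_mul hA).matrix_det continuous_const
  · intro x
    have h0 : (0 : ℝ) ∈ closure (x.addSMul nondegenerateWitness2 ⁻¹' NondegenerateSet2) := by
      rw [(dense_preimage_addSMul_nondegenerateSet2 x).closure_eq]
      trivial
    simpa using map_mem_closure (SymCoeffs2.continuous_addSMul x nondegenerateWitness2) h0
      (Set.mapsTo_preimage _ _)
end

section
/- For every family of real numbers γ^l_{ij} (i,j,l ∈ {1,2}) with γ^l_{ij} = γ^l_{ji}, and every family of real numbers c_{ij}^{lm} (i,j,l,m ∈ {1,2}) with c_{ij}^{lm} = c_{ji}^{lm}, there exists a NONZERO matrix b = (b^k_s)_{k,s ∈ {1,2}} of real numbers such that, with i = 1 and p = 2, for all j,l ∈ {1,2}: Σ_{k,s=1}^{2} (γ^k_{pj}γ^s_{ki} − γ^k_{ij}γ^s_{kp}) b^l_s + Σ_{k,s=1}^{2} (γ^l_{pk}γ^k_{js} − γ^k_{pj}γ^l_{ks}) b^s_i + Σ_{k,s=1}^{2} (γ^l_{pk}γ^k_{si} − γ^l_{ik}γ^k_{sp})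 b^s_j + Σ_{k,s=1}^{2} (γ^k_{ij}γ^l_{ks} − γ^l_{ik}γ^k_{js}) b^s_p + Σ_{k=1}^{2} [(c_{ij}^{lk} − c_{kj}^{li}) b^k_p + (c_{kj}^{lp} − c_{pj}^{lk}) b^k_i + (c_{pj}^{ki} − c_{ij}^{kp}) b^l_k + (c_{ik}^{lp} − c_{pk}^{li}) b^k_j] = 0. In other words, in dimension n = 2 this homogeneous linear system in the four unknowns b^k_s is always degenerate. -/
open Finset

/-- In dimension `n = 2` the homogeneous linear system in the four unknowns `b k s`
arising from the first-jet compatibility conditions (with `i = 1`, `p = 2`,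
represented here by the indices `0` and `1` of `Fin 2`) is always degenerate:
for every symmetric `γ` and `c` there is a nonzero solution `b`. -/
theorem two_dim_first_jet_system_degenerate
    (γ : Fin 2 → Fin 2 → Fin 2 → ℝ) (hγ : ∀ l i j, γ l i j = γ l j i)
    (c : Fin 2 → Fin 2 → Fin 2 → Fin 2 → ℝ) (hc : ∀ i j l m, c i j l m = c j i l m) :
    ∃ b : Fin 2 → Fin 2 → ℝ, b ≠ 0 ∧
      ∀ j l : Fin 2,
        (∑ k : Fin 2, ∑ s : Fin 2, (γ k 1 j * γ s k 0 - γ k 0 j * γ s k 1) * b l s) +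
        (∑ k : Fin 2, ∑ s : Fin 2, (γ l 1 k * γ k j s - γ k 1 j * γ l k s) * b s 0) +
        (∑ k : Fin 2, ∑ s : Fin 2, (γ l 1 k * γ k s 0 - γ l 0 k * γ k s 1) * b s j) +
        (∑ k : Fin 2, ∑ s : Fin 2, (γ k 0 j * γ l k s - γ l 0 k * γ k j s) * b s 1) +
        (∑ k : Fin 2,
          ((c 0 j l k - c k j l 0) * b k 1 + (c k j l 1 - c 1 j l k) * b k 0 +
           (c 1 j k 0 - c 0 j k 1) * b l k + (c 0 k l 1 - c 1 k l 0) * b k j)) = 0 := by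
  have h10 : ∀ l, γ l 1 0 = γ l 0 1 := fun l => hγ l 1 0
  have hc10 : ∀ l m, c 1 0 l m = c 0 1 l m := fun l m => hc 1 0 l m
  by_cases h : (-c 0 0 1 1 + c 0 1 1 0 - γ 0 0 0 * γ 1 0 1 + γ 0 0 1 * γ 1 0 0 - γ 1 0 0 * γ 1 1 1 + γ 1 0 1 * γ 1 0 1) = 0 ∧ (c 0 1 0 1 - c 1 1 0 0 - γ 0 0 0 * γ 0 1 1 + γ 0 0 1 * γ 0 0 1 - γ 0 0 1 * γ 1 1 1 + γ 0 1 1 * γ 1 0 1) = 0 ∧ (-c 0 0 0 1 + c 0 1 0 0 + c 0 1 1 1 - c 1 1 1 0 + 2 * (γ 0 0 1 * γ 1 0 1) - 2 * (γ 0 1 1 * γ 1 0 0)) = 0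
  · obtain ⟨hu, hv, ht⟩ := h
    refine ⟨![![0, 1], ![0, 0]], ?_, ?_⟩
    · intro hb
      have := congrFun (congrFun hb 0) 1
      simp at this
    · intro j l
      fin_cases j <;> fin_cases l <;>
        simp only [Fin.sum_univ_two, Fin.isValue, Fin.mk_zero, Fin.mk_one,
          Matrix.cons_val_zero, Matrix.cons_val_one, Matrix.head_cons, h10, hc10] <;>
        [linear_combination hu; ring; linear_combination -ht; linear_combination -hu]
  · refine ⟨![![(-c 0 0 0 1 + c 0 1 0 0 + c 0 1 1 1 - c 1 1 1 0 + 2 * (γ 0 0 1 * γ 1 0 1) - 2 * (γ 0 1 1 * γ 1 0 0)), -2 * (c 0 1 0 1 - c 1 1 0 0 - γ 0 0 0 * γ 0 1 1 + γ 0 0 1 * γ 0 0 1 - γ 0 0 1 * γ 1 1 1 + γ 0 1 1 * γ 1 0 1)], ![2 * (-c 0 0 1 1 + c 0 1 1 0 - γ 0 0 0 * γ 1 0 1 + γ 0 0 1 * γ 1 0 0 - γ 1 0 0 * γ 1 1 1 + γ 1 0 1 * γ 1 0 1), -(-c 0 0 0 1 + c 0 1 0 0 + c 0 1 1 1 - c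 1 1 1 0 + 2 * (γ 0 0 1 * γ 1 0 1) - 2 * (γ 0 1 1 * γ 1 0 0))]], ?_, ?_⟩
    · intro hb
      apply h
      have h00 := congrFun (congrFun hb 0) 0
      have h01 := congrFun (congrFun hb 0) 1
      have h10' := congrFun (congrFun hb 1) 0
      simp only [Matrix.cons_val_zero, Matrix.cons_val_one, Matrix.head_cons,
        Pi.zero_apply] at h00 h01 h10'
      refine ⟨by linarith, by linarith, h00⟩
    · intro j l
      fin_cases j <;> fin_cases l <;>
        simp only [Fin.sum_univ_two, Fin.isValue, Fin.mk_zero, Fin.mk_one,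
          Matrix.cons_val_zero, Matrix.cons_val_one, Matrix.head_cons, h10, hc10] <;>
        ring
end
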